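/- arXiv:2601.18200 — 5 statements merged into one kernel-verified Lean document; each statement's English description precedes it below -/
import Mathlib

section
/- Exchange lemma: Given two batches with maxima h_small < h_large, if a sample of length L_long lies in the batch with maximum h_small and a sample of length L_short lies in the batch with maximum h_large, with L_short < L_long ≤ h_large, then swapping the two samples between the batches does not increase the sum of the two batch maxima. -/
/-- Exchange lemma: swapping a long sample from the low-max batch with a short
sample from the high-max batch does not increase the sum of the two batch maxima. -/
theorem exchange_lemma (B₁ B₂ : Multiset ℕ) (Llong Lshort : ℕ)
    (hB₁ : B₁ ≠ 0) (hB₂ : B₂ ≠ 0)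
    (hmem₁ : Llong ∈ B₁) (hmem₂ : Lshort ∈ B₂)
    (hmax : B₁.sup < B₂.sup)
    (hlen : Lshort < Llong) (hle : Llong ≤ B₂.sup) :
    (Lshort ::ₘ B₁.erase Llong).sup + (Llong ::ₘ B₂.erase Lshort).sup ≤
      B₁.sup + B₂.sup := by
  have h1 : (B₁.erase Llong).sup ≤ B₁.sup := Multiset.sup_le.2 fun b hb =>
    Multiset.le_sup (Multiset.mem_of_mem_erase hb)
  have h2 : (B₂.erase Lshort).sup ≤ B₂.sup := Multiset.sup_le.2 fun b hb =>
    Multiset.le_sup (Multiset.mem_of_mem_erase hb)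
  have hLs : Lshort ≤ B₁.sup := le_trans hlen.le (Multiset.le_sup hmem₁)
  rw [Multiset.sup_cons, Multiset.sup_cons]
  exact Nat.add_le_add (sup_le hLs h1) (sup_le hle h2)
end

section
/- Sorted contiguous partitioning is optimal: Let lengths L_1 ≤ L_2 ≤ ... ≤ L_{mN} be sorted in nondecreasing order. Among all partitions of these mN items into m batches of size N, the partition into consecutive blocks {L_{(j-1)N+1}, ..., L_{jN}} for j = 1,...,m minimizes the sum of batch maxima \(\sum_{j=1}^{m} \max_{x \in B_j} L(x)\). -/
/-- The multiset of the first `n` values of `L`. -/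
def lengthsOf (L : ℕ → ℕ) (start n : ℕ) : Multiset ℕ :=
  (Multiset.range n).map (fun r => L (start + r))

/-- `P` is a partition of the multiset `X` into batches each of size `N`. -/
def IsPartition (X : Multiset ℕ) (N : ℕ) (P : Multiset (Multiset ℕ)) : Prop :=
  P.sum = X ∧ ∀ B ∈ P, Multiset.card B = N

/-- Sum of batch maxima of a partition. -/
def sumMax (P : Multiset (Multiset ℕ)) : ℕ := (P.map Multiset.sup).sum

theorem mem_msum {a : ℕ} : ∀ {s : Multiset (Multiset ℕ)}, a ∈ s.sum → ∃ B ∈ s, a ∈ B := by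
  intro s
  induction s using Multiset.induction with
  | empty => simp
  | cons B s ih =>
    intro h
    rw [Multiset.sum_cons, Multiset.mem_add] at h
    rcases h with h | h
    · exact ⟨B, Multiset.mem_cons_self _ _, h⟩
    · obtain ⟨C, hC, hC2⟩ := ih h
      exact ⟨C, Multiset.mem_cons_of_mem hC, hC2⟩

theorem key (N : ℕ) (c : ℕ → ℕ) :
    ∀ m (P : Multiset (Multiset ℕ)), (∀ B ∈ P, Multiset.card B = N) →
    (∀ j < m, (m - 1 - j) * N + 1 ≤ P.sum.countP (fun x => c j ≤ x)) →
    ∑ j ∈ Finset.range m, c j ≤ sumMax P := by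
  intro m
  induction m with
  | zero => intro P _ _; simp
  | succ m ih =>
    intro P hcard hcount
    have h1 : 1 ≤ P.sum.countP (fun x => c m ≤ x) := by
      have := hcount m (Nat.lt_succ_self m)
      omega
    have hex : ∃ x ∈ P.sum, c m ≤ x := by
      rw [← Multiset.countP_pos]; exact lt_of_lt_of_le Nat.zero_lt_one h1
    obtain ⟨x, hxsum, hcx⟩ := hex
    obtain ⟨B, hB, hxB⟩ := mem_msum hxsum
    have hrep : P = B ::ₘ P.erase B := (Multiset.cons_erase hB).symm
    have hsum : P.sum = B + (P.erase B).sum := by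
      conv_lhs => rw [hrep]
      simp
    have ihap : ∑ j ∈ Finset.range m, c j ≤ sumMax (P.erase B) := by
      apply ih
      · intro B' hB'; exact hcard B' (Multiset.mem_of_mem_erase hB')
      · intro j hj
        have h2 := hcount j (Nat.lt_succ_of_lt hj)
        rw [hsum, Multiset.countP_add] at h2
        have h3 : Multiset.countP (fun x => c j ≤ x) B ≤ Multiset.card B :=
          Multiset.countP_le_card _ _
        rw [hcard B hB] at h3
        have h4 : m + 1 - 1 - j = (m - 1 - j) + 1 := by omega
        rw [h4, Nat.succ_mul] at h2
        omega
    have hsupB : c m ≤ B.sup := le_trans hcx (Multiset.le_sup hxB)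
    have : sumMax P = B.sup + sumMax (P.erase B) := by
      conv_lhs => rw [hrep]
      simp [sumMax]
    rw [Finset.sum_range_succ, this]
    omega

/-- Sorted contiguous partitioning minimizes the sum of batch maxima among
all partitions of the `m*N` sorted lengths into `m` batches of size `N`. -/
theorem sorted_contiguous_minimizes_sumMax (L : ℕ → ℕ) (hL : Monotone L)
    (m N : ℕ) (hN : 0 < N)
    (P : Multiset (Multiset ℕ)) (hP : IsPartition (lengthsOf L 0 (m * N)) N P) :
    (∑ j ∈ Finset.range m, (lengthsOf L (j * N) N).sup) ≤ sumMax P := by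
  obtain ⟨hsum, hcard⟩ := hP
  set c : ℕ → ℕ := fun j => L (j * N + (N - 1)) with hc
  have step1 : ∑ j ∈ Finset.range m, (lengthsOf L (j * N) N).sup ≤
      ∑ j ∈ Finset.range m, c j := by
    apply Finset.sum_le_sum
    intro j hj
    apply Multiset.sup_le.mpr
    intro b hb
    simp only [lengthsOf, Multiset.mem_map, Multiset.mem_range] at hb
    obtain ⟨r, hr, rfl⟩ := hb
    exact hL (by omega)
  refine le_trans step1 (key N c m P hcard ?_)
  intro j hj
  rw [hsum]
  obtain ⟨d, hd⟩ : ∃ d, m - 1 - j = d := ⟨_, rfl⟩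
  have hk : m * N = (j * N + (N - 1)) + (d * N + 1) := by
    have h1 : m = j + 1 + d := by omega
    rw [h1, Nat.add_mul, Nat.add_mul, Nat.one_mul]; omega
  rw [hd]
  rw [lengthsOf, hk, Multiset.range_add, Multiset.map_add, Multiset.countP_add]
  have : Multiset.countP (fun x => c j ≤ x)
      ((Multiset.map (fun r => (j * N + (N - 1)) + r) (Multiset.range (d * N + 1))).map
        (fun r => L (0 + r))) = d * N + 1 := by
    rw [Multiset.countP_eq_card.mpr]
    · simp
    · intro a ha
      simp only [Multiset.mem_map, Multiset.mem_range] at ha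
      obtain ⟨r, ⟨s, hs, rfl⟩, rfl⟩ := ha
      exact hL (by omega)
  omega
end

section
/- Sorted contiguous partitioning minimizes total padding: under the setting of equal-size batches, the partition of sorted lengths into consecutive blocks of size N achieves the global minimum of the total padding overhead \(\sum_j \sum_{x \in B_j} (\max_{y \in B_j} L(y) - L(x))\) among all partitions into batches of size N. -/
/-- Padding overhead of a single batch. -/
def batchPad (B : Multiset ℕ) : ℕ := (B.map (fun x => B.sup - x)).sum

/-- Total padding overhead of a partition. -/
def totalPad (P : Multiset (Multiset ℕ)) : ℕ := (P.map batchPad).sum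

namespace SortedPad

lemma batchPad_add_sum (B : Multiset ℕ) :
    batchPad B + B.sum = Multiset.card B * B.sup := by
  have h1 : B.sum = (B.map id).sum := by simp
  have h2 : (B.map (fun x => (B.sup - x) + x)).sum = (B.map (fun _ => B.sup)).sum := by
    congr 1
    apply Multiset.map_congr rfl
    intro x hx
    exact Nat.sub_add_cancel (Multiset.le_sup hx)
  calc batchPad B + B.sum
      = (B.map (fun x => (B.sup - x) + x)).sum := by
        rw [Multiset.sum_map_add]; simp [batchPad]
    _ = (B.map (fun _ => B.sup)).sum := h2
    _ = Multiset.card B * B.sup := by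
        simp [Multiset.map_const', Multiset.sum_replicate, smul_eq_mul]

lemma sup_mem (Y : Multiset ℕ) (h : Y ≠ 0) : Y.sup ∈ Y := by
  induction Y using Multiset.induction with
  | empty => simp at h
  | cons a s ih =>
    rcases eq_or_ne s 0 with rfl | hs
    · simp
    · rw [Multiset.sup_cons]
      rcases le_total a s.sup with hle | hle
      · rw [sup_eq_right.mpr hle]
        exact Multiset.mem_cons_of_mem (ih hs)
      · rw [sup_eq_left.mpr hle]
        exact Multiset.mem_cons_self a s

lemma mem_msum {a : ℕ} {P : Multiset (Multiset ℕ)} (h : a ∈ P.sum) :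
    ∃ B ∈ P, a ∈ B := by
  induction P using Multiset.induction with
  | empty => simp at h
  | cons C s ih =>
    rw [Multiset.sum_cons, Multiset.mem_add] at h
    rcases h with h | h
    · exact ⟨C, Multiset.mem_cons_self _ _, h⟩
    · obtain ⟨B, hB, hab⟩ := ih h
      exact ⟨B, Multiset.mem_cons_of_mem hB, hab⟩

lemma card_msum (P : Multiset (Multiset ℕ)) :
    Multiset.card P.sum = (P.map Multiset.card).sum := by
  induction P using Multiset.induction with
  | empty => simp
  | cons C s ih => simp [Multiset.sum_cons, ih]

lemma sum_msum (P : Multiset (Multiset ℕ)) :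
    P.sum.sum = (P.map Multiset.sum).sum := by
  induction P using Multiset.induction with
  | empty => simp
  | cons C s ih => simp [Multiset.sum_cons, ih]

/-- If sorted `s` is a sublist of sorted `t`, then elementwise `t[i] ≤ s[i]`. -/
lemma getD_le_of_sublist : ∀ {s t : List ℕ}, s.Sublist t → s.Pairwise (· ≤ ·) →
    t.Pairwise (· ≤ ·) → ∀ i, i < s.length → t.getD i 0 ≤ s.getD i 0 := by
  intro s t hsub
  induction hsub with
  | slnil => intro _ _ i hi; simp at hi
  | @cons s t b hsub ih =>
    intro hs ht i hi
    have ht' : t.Pairwise (· ≤ ·) := (List.pairwise_cons.mp ht).2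
    have hlen : i < t.length := lt_of_lt_of_le hi hsub.length_le
    have h1 : (b :: t).getD i 0 ≤ t.getD i 0 := by
      rw [List.getD_eq_getElem _ _ (by simpa using Nat.lt_succ_of_lt hlen),
        List.getD_eq_getElem _ _ hlen]
      have h2 := ht.rel_get_of_lt (a := ⟨i, by simpa using Nat.lt_succ_of_lt hlen⟩)
        (b := ⟨i+1, by simpa using hlen⟩) (by simp)
      simpa using h2
    exact le_trans h1 (ih hs ht' i hi)
  | @cons_cons s t a hsub ih =>
    intro hs ht i hi
    cases i with
    | zero => simp
    | succ k =>
      have hk : k < s.length := by simpa using hi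
      have hkt : k < t.length := lt_of_lt_of_le hk hsub.length_le
      rw [show (a :: s).getD (k+1) 0 = s.getD k 0 by simp [List.getD],
        show (a :: t).getD (k+1) 0 = t.getD k 0 by simp [List.getD]]
      exact ih (List.pairwise_cons.mp hs).2 (List.pairwise_cons.mp ht).2 k hk

lemma key (N : ℕ) (hN : 0 < N) :
    ∀ m (P : Multiset (Multiset ℕ)) (Y : Multiset ℕ), P.sum = Y →
    (∀ B ∈ P, Multiset.card B = N) → Multiset.card P = m →
    (∑ j ∈ Finset.range m, (Y.sort (· ≤ ·)).getD (j * N + N - 1) 0)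
      ≤ (P.map Multiset.sup).sum := by
  intro m
  induction m with
  | zero => intro P Y _ _ _; simp
  | succ m ih =>
    intro P Y hPY hcard hcP
    have hcardY : Multiset.card Y = (m + 1) * N := by
      rw [← hPY, card_msum]
      rw [Multiset.map_congr rfl hcard]
      simp [Multiset.sum_replicate, hcP]
      ring
    have hYne : Y ≠ 0 := by
      intro h; rw [h] at hcardY; simp at hcardY
      omega
    obtain ⟨B, hBP, hsupB⟩ := mem_msum (a := Y.sup) (by rw [hPY]; exact sup_mem Y hYne)
    set P' := P.erase B with hP'
    have hPcons : P = B ::ₘ P' := (Multiset.cons_erase hBP).symm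
    have hcP' : Multiset.card P' = m := by
      have := congrArg Multiset.card hPcons
      simp at this; omega
    set Y' := Y - B with hY'
    have hsumP' : P'.sum = Y' := by
      have : B + P'.sum = Y := by rw [← hPY, hPcons, Multiset.sum_cons]
      rw [hY', ← this]; simp
    have hBle : B ≤ Y := by
      rw [← hPY, hPcons, Multiset.sum_cons]; exact Multiset.le_add_right _ _
    have hcardY' : Multiset.card Y' = m * N := by
      rw [hY', Multiset.card_sub hBle, hcardY, hcard B hBP]
      ring_nf; omega
    have hcard' : ∀ C ∈ P', Multiset.card C = N := fun C hC =>
      hcard C (Multiset.mem_of_mem_erase hC)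
    have hIH := ih P' Y' hsumP' hcard' hcP'
    -- sublist of sorted lists
    have hsub : (Y'.sort (· ≤ ·)).Sublist (Y.sort (· ≤ ·)) := by
      apply List.sublist_of_subperm_of_pairwise _ (Multiset.pairwise_sort _ _)
        (Multiset.pairwise_sort _ _)
      rw [← Multiset.coe_le, Multiset.sort_eq, Multiset.sort_eq]
      exact Multiset.sub_le_self Y B
    have hlen' : (Y'.sort (· ≤ ·)).length = m * N := by
      rw [Multiset.length_sort, hcardY']
    have hlen : (Y.sort (· ≤ ·)).length = (m + 1) * N := by
      rw [Multiset.length_sort, hcardY]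
    have hstep1 : (∑ j ∈ Finset.range m, (Y.sort (· ≤ ·)).getD (j * N + N - 1) 0)
        ≤ ∑ j ∈ Finset.range m, (Y'.sort (· ≤ ·)).getD (j * N + N - 1) 0 := by
      apply Finset.sum_le_sum
      intro j hj
      have hjm : j < m := Finset.mem_range.mp hj
      apply getD_le_of_sublist hsub (Multiset.pairwise_sort _ _) (Multiset.pairwise_sort _ _)
      rw [hlen']
      have h1 : (j + 1) * N ≤ m * N := Nat.mul_le_mul_right N hjm
      have h2 : j * N + N = (j + 1) * N := by ring
      omega
    have hstep2 : (Y.sort (· ≤ ·)).getD (m * N + N - 1) 0 ≤ B.sup := by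
      have hidx : m * N + N - 1 < (Y.sort (· ≤ ·)).length := by
        rw [hlen]
        have h2 : (m + 1) * N = m * N + N := by ring
        omega
      rw [List.getD_eq_getElem _ _ hidx]
      have hmem : (Y.sort (· ≤ ·))[m * N + N - 1] ∈ Y := by
        rw [← Multiset.mem_sort (· ≤ ·)]
        exact List.getElem_mem _
      exact le_trans (Multiset.le_sup hmem) (Multiset.le_sup hsupB)
    rw [Finset.sum_range_succ, hPcons, Multiset.map_cons, Multiset.sum_cons]
    calc (∑ j ∈ Finset.range m, (Y.sort (· ≤ ·)).getD (j * N + N - 1) 0)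
          + (Y.sort (· ≤ ·)).getD (m * N + N - 1) 0
        ≤ (P'.map Multiset.sup).sum + B.sup :=
          Nat.add_le_add (le_trans hstep1 hIH) hstep2
      _ = B.sup + (P'.map Multiset.sup).sum := Nat.add_comm _ _

lemma lengthsOf_split (L : ℕ → ℕ) (s a b : ℕ) :
    lengthsOf L s (a + b) = lengthsOf L s a + lengthsOf L (s + a) b := by
  unfold lengthsOf
  rw [Multiset.range_add, Multiset.map_add, Multiset.map_map]
  congr 1
  apply Multiset.map_congr rfl
  intro x _
  simp [add_assoc, add_comm, add_left_comm]

lemma contiguous_sum (L : ℕ → ℕ) (m N : ℕ) :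
    ∑ j ∈ Finset.range m, lengthsOf L (j * N) N = lengthsOf L 0 (m * N) := by
  induction m with
  | zero => simp [lengthsOf]
  | succ m ih =>
    rw [Finset.sum_range_succ, ih, show (m + 1) * N = m * N + N by ring,
      lengthsOf_split L 0 (m * N) N]
    simp

lemma sup_lengthsOf (L : ℕ → ℕ) (hL : Monotone L) (s N : ℕ) (hN : 0 < N) :
    (lengthsOf L s N).sup = L (s + N - 1) := by
  apply le_antisymm
  · apply Multiset.sup_le.mpr
    intro x hx
    unfold lengthsOf at hx
    rw [Multiset.mem_map] at hx
    obtain ⟨r, hr, rfl⟩ := hx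
    rw [Multiset.mem_range] at hr
    exact hL (by omega)
  · apply Multiset.le_sup
    unfold lengthsOf
    rw [Multiset.mem_map]
    exact ⟨N - 1, Multiset.mem_range.mpr (by omega), by congr 1; omega⟩

lemma finset_sum_msum (s : Finset ℕ) (f : ℕ → Multiset ℕ) :
    (∑ j ∈ s, f j).sum = ∑ j ∈ s, (f j).sum := by
  classical
  induction s using Finset.induction with
  | empty => simp
  | insert _ _ h ih => simp [Finset.sum_insert h, ih]

lemma card_lengthsOf (L : ℕ → ℕ) (s n : ℕ) : Multiset.card (lengthsOf L s n) = n := by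
  simp [lengthsOf]

lemma sort_lengthsOf (L : ℕ → ℕ) (hL : Monotone L) (n : ℕ) :
    (lengthsOf L 0 n).sort (· ≤ ·) = (List.range n).map L := by
  refine (fun hp hs => List.Perm.eq_of_pairwise (fun _ _ _ _ h1 h2 => le_antisymm h1 h2)
    (Multiset.pairwise_sort _ _) hs hp) ?_ ?_
  · rw [← Multiset.coe_eq_coe, Multiset.sort_eq]
    unfold lengthsOf
    rw [Multiset.range]
    simp [Multiset.map_coe]
  · exact (List.pairwise_le_range (n := n)).map L (fun _ _ h => hL h)

end SortedPad

open SortedPad in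
/-- Sorted contiguous partitioning minimizes the total padding overhead among
all partitions of the `m*N` sorted lengths into `m` batches of size `N`. -/
theorem sorted_contiguous_minimizes_padding (L : ℕ → ℕ) (hL : Monotone L)
    (m N : ℕ) (hN : 0 < N)
    (P : Multiset (Multiset ℕ)) (hP : IsPartition (lengthsOf L 0 (m * N)) N P) :
    (∑ j ∈ Finset.range m, batchPad (lengthsOf L (j * N) N)) ≤ totalPad P := by
  obtain ⟨hPsum, hPcard⟩ := hP
  set Y := lengthsOf L 0 (m * N) with hY
  have hcP : Multiset.card P = m := by
    have h1 : Multiset.card Y = m * N := card_lengthsOf L 0 (m * N)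
    have h2 : Multiset.card Y = Multiset.card P * N := by
      rw [← hPsum, card_msum, Multiset.map_congr rfl hPcard]
      simp [Multiset.sum_replicate, mul_comm]
    have := h1.symm.trans h2
    exact Nat.eq_of_mul_eq_mul_right hN (by omega)
  -- identity for contiguous side
  have hleft : (∑ j ∈ Finset.range m, batchPad (lengthsOf L (j * N) N)) + Y.sum
      = N * ∑ j ∈ Finset.range m, L (j * N + N - 1) := by
    have : Y.sum = ∑ j ∈ Finset.range m, (lengthsOf L (j * N) N).sum := by
      rw [hY, ← contiguous_sum L m N, finset_sum_msum]
    rw [this, ← Finset.sum_add_distrib, Finset.mul_sum]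
    apply Finset.sum_congr rfl
    intro j _
    rw [batchPad_add_sum, card_lengthsOf, sup_lengthsOf L hL _ _ hN]
  -- identity for P side
  have hright : totalPad P + Y.sum = N * (P.map Multiset.sup).sum := by
    have h1 : Y.sum = (P.map Multiset.sum).sum := by rw [← hPsum, sum_msum]
    rw [totalPad, h1, ← Multiset.sum_map_add]
    have : (P.map (fun B => batchPad B + B.sum)).sum
        = (P.map (fun B => N * B.sup)).sum := by
      congr 1
      apply Multiset.map_congr rfl
      intro B hB
      rw [batchPad_add_sum, hPcard B hB]
    rw [this, Multiset.sum_map_mul_left]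
  -- compare sups
  have hsups : (∑ j ∈ Finset.range m, L (j * N + N - 1)) ≤ (P.map Multiset.sup).sum := by
    have hk := key N hN m P Y hPsum hPcard hcP
    refine le_trans (le_of_eq ?_) hk
    apply Finset.sum_congr rfl
    intro j hj
    have hjm : j < m := Finset.mem_range.mp hj
    rw [hY, sort_lengthsOf L hL]
    have hidx : j * N + N - 1 < m * N := by
      have h1 : (j + 1) * N ≤ m * N := Nat.mul_le_mul_right N hjm
      have h2 : j * N + N = (j + 1) * N := by ring
      omega
    rw [List.getD_eq_getElem _ _ (by simpa using hidx)]
    simp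
  have : (∑ j ∈ Finset.range m, batchPad (lengthsOf L (j * N) N)) + Y.sum
      ≤ totalPad P + Y.sum := by
    rw [hleft, hright]
    exact Nat.mul_le_mul_left N hsups
  omega
end

section
/- Refining a sorted partition never increases padding: if each batch of size 2N in a sorted contiguous partition is split into its lower and upper sorted halves of size N, the total padding overhead of the refined partition is at most that of the original partition. -/
lemma lengthsOf_split (L : ℕ → ℕ) (s N : ℕ) :
    lengthsOf L s (2 * N) = lengthsOf L s N + lengthsOf L (s + N) N := by
  unfold lengthsOf
  rw [two_mul, Multiset.range_add, Multiset.map_add, Multiset.map_map]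
  congr 1
  apply Multiset.map_congr rfl
  intro x _
  simp [Nat.add_assoc]

lemma batchPad_le (B A : Multiset ℕ) (h : B ≤ A) :
    batchPad B ≤ (B.map (fun x => A.sup - x)).sum := by
  apply Multiset.sum_map_le_sum_map
  intro i _
  apply Nat.sub_le_sub_right
  apply Multiset.sup_le.2
  intro b hb
  exact Multiset.le_sup (Multiset.mem_of_le h hb)

/-- Refining a sorted contiguous partition never increases padding: splitting
each sorted block of size `2N` into its lower and upper halves of size `N`
gives total padding at most that of the original partition. -/
theorem refine_sorted_partition_pad_le (L : ℕ → ℕ) (hL : Monotone L)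
    (m N : ℕ) (hN : 0 < N) :
    (∑ j ∈ Finset.range m,
        (batchPad (lengthsOf L (j * (2 * N)) N) +
         batchPad (lengthsOf L (j * (2 * N) + N) N))) ≤
      ∑ j ∈ Finset.range m, batchPad (lengthsOf L (j * (2 * N)) (2 * N)) := by
  apply Finset.sum_le_sum
  intro j _
  have hsplit := lengthsOf_split L (j * (2 * N)) N
  have h1 : lengthsOf L (j * (2 * N)) N ≤ lengthsOf L (j * (2 * N)) (2 * N) := by
    rw [hsplit]; exact Multiset.le_add_right _ _
  have h2 : lengthsOf L (j * (2 * N) + N) N ≤ lengthsOf L (j * (2 * N)) (2 * N) := by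
    rw [hsplit]; exact Multiset.le_add_left _ _
  calc batchPad (lengthsOf L (j * (2 * N)) N) +
        batchPad (lengthsOf L (j * (2 * N) + N) N)
      ≤ ((lengthsOf L (j * (2 * N)) N).map
            (fun x => (lengthsOf L (j * (2 * N)) (2 * N)).sup - x)).sum +
        ((lengthsOf L (j * (2 * N) + N) N).map
            (fun x => (lengthsOf L (j * (2 * N)) (2 * N)).sup - x)).sum :=
        Nat.add_le_add (batchPad_le _ _ h1) (batchPad_le _ _ h2)
    _ = batchPad (lengthsOf L (j * (2 * N)) (2 * N)) := by
        rw [batchPad, hsplit, Multiset.map_add, Multiset.sum_add]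
end

section
/- The sum of batch maxima for any equal-size partition is at most m times the global maximum and at least the sum of batch maxima achieved by the sorted contiguous partition: m·min X ≤ Σ_sorted ≤ Σ_any ≤ m·max X, where Σ_sorted and Σ_any denote the sums of batch maxima for the sorted contiguous partition and an arbitrary partition, respectively. -/
theorem List.Pairwise.getElem_le_getElem_of_sublist {α : Type*} [Preorder α] {l l' : List α}
    (hl : l.Pairwise (· ≤ ·)) (hs : l'.Sublist l) {k : ℕ} (hk : k < l'.length) :
    l[k]'(hk.trans_le hs.length_le) ≤ l'[k] := by
  induction hs generalizing k with
  | slnil => simp at hk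
  | @cons l₁ l₂ a hs ih =>
    have hk₂ : k < l₂.length := hk.trans_le hs.length_le
    calc (a :: l₂)[k]'(by simp; omega) ≤ (a :: l₂)[k + 1]'(by simpa) :=
          List.pairwise_iff_getElem.mp hl k (k + 1) _ _ k.lt_succ_self
      _ ≤ l₁[k] := ih (List.pairwise_cons.mp hl).2 hk
  | cons_cons a hs ih =>
    cases k with
    | zero => rfl
    | succ k => exact ih (List.pairwise_cons.mp hl).2 (by simpa using hk)

theorem Nat.mul_add_sub_one_lt_mul {j m N : ℕ} (hN : 0 < N) (hj : j < m) :
    j * N + N - 1 < m * N := by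
  have : (j + 1) * N ≤ m * N := Nat.mul_le_mul_right N hj
  rw [add_mul, one_mul] at this
  omega

theorem lengthsOf_sup {L : ℕ → ℕ} (hL : Monotone L) (s : ℕ) {n : ℕ} (hn : 0 < n) :
    (lengthsOf L s n).sup = L (s + n - 1) := by
  apply le_antisymm
  · refine Multiset.sup_le.mpr fun x hx => ?_
    obtain ⟨r, hr, rfl⟩ := Multiset.mem_map.mp hx
    exact hL (by rw [Multiset.mem_range] at hr; omega)
  · exact Multiset.le_sup (Multiset.mem_map.mpr ⟨n - 1, by simpa, by congr 1; omega⟩)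

namespace IsPartition

variable {X : Multiset ℕ} {N : ℕ} {P : Multiset (Multiset ℕ)}

theorem card_eq (hP : IsPartition X N P) : Multiset.card X = Multiset.card P * N := by
  rw [← hP.1, ← Multiset.join, Multiset.card_join, Multiset.map_congr rfl hP.2,
    Multiset.map_const', Multiset.sum_replicate, smul_eq_mul]

theorem erase (hP : IsPartition X N P) {B : Multiset ℕ} (hB : B ∈ P) :
    IsPartition (X - B) N (P.erase B) :=
  ⟨by rw [← hP.1, ← Multiset.sum_erase hB, add_tsub_cancel_left],
    fun C hC => hP.2 C (Multiset.mem_of_mem_erase hC)⟩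

theorem card_eq_of_card_eq (hP : IsPartition X N P) (hN : 0 < N) {m : ℕ}
    (hX : Multiset.card X = m * N) : Multiset.card P = m :=
  Nat.eq_of_mul_eq_mul_right hN (hP.card_eq ▸ hX)

end IsPartition

theorem sup_add_sumMax_erase {P : Multiset (Multiset ℕ)} {B : Multiset ℕ} (hB : B ∈ P) :
    B.sup + sumMax (P.erase B) = sumMax P :=
  Multiset.sum_map_erase hB

theorem sumMax_le_card_mul {P : Multiset (Multiset ℕ)} {c : ℕ} (h : ∀ x ∈ P.sum, x ≤ c) :
    sumMax P ≤ Multiset.card P * c := by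
  refine (Multiset.sum_le_card_nsmul _ c fun b hb => ?_).trans_eq (by simp)
  obtain ⟨B, hB, rfl⟩ := Multiset.mem_map.mp hb
  exact Multiset.sup_le.mpr fun x hx => h x (Multiset.mem_join.mpr ⟨B, hB, hx⟩)

/-- `l.getD (j * N + N - 1) 0` is the maximum of the `j`-th block of the sorted list `l`.
The batch containing the largest element has at least that element as its maximum; removing it
leaves a sorted sublist, which dominates the original list index by index. -/
theorem sum_sortedBlockMax_le_sumMax {N : ℕ} (hN : 0 < N) {m : ℕ} {l : List ℕ}
    (hl : l.Pairwise (· ≤ ·)) (hlen : l.length = m * N) {P : Multiset (Multiset ℕ)}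
    (hP : IsPartition l N P) :
    ∑ j ∈ Finset.range m, l.getD (j * N + N - 1) 0 ≤ sumMax P := by
  induction m generalizing l P with
  | zero => simp
  | succ m ih =>
    have hlast : m * N + N - 1 < l.length :=
      hlen ▸ Nat.mul_add_sub_one_lt_mul hN m.lt_succ_self
    obtain ⟨B, hB, hlastB⟩ : ∃ B ∈ P, l.getD (m * N + N - 1) 0 ∈ B := by
      rw [← Multiset.mem_join, Multiset.join, hP.1, List.getD_eq_getElem _ _ hlast]
      exact Multiset.mem_coe.mpr (List.getElem_mem hlast)
    set l' := ((l : Multiset ℕ) - B).sort (· ≤ ·)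
    have hP' : IsPartition l' N (P.erase B) := by
      rw [Multiset.sort_eq]
      exact hP.erase hB
    have hlen' : l'.length = m * N := by
      have hcardP := hP.card_eq_of_card_eq hN (by rwa [Multiset.coe_card])
      simpa [Multiset.card_erase_of_mem hB, hcardP] using hP'.card_eq
    have hsub : l'.Sublist l := by
      refine List.sublist_of_subperm_of_pairwise ?_ (Multiset.pairwise_sort _ _) hl
      rw [← Multiset.coe_le, Multiset.sort_eq]
      exact Multiset.sub_le_self _ _
    have hterm : ∀ j ∈ Finset.range m,
        l.getD (j * N + N - 1) 0 ≤ l'.getD (j * N + N - 1) 0 := by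
      intro j hj
      have hj' := hlen' ▸ Nat.mul_add_sub_one_lt_mul hN (Finset.mem_range.mp hj)
      rw [List.getD_eq_getElem _ _ hj', List.getD_eq_getElem _ _ (hj'.trans_le hsub.length_le)]
      exact hl.getElem_le_getElem_of_sublist hsub hj'
    calc ∑ j ∈ Finset.range (m + 1), l.getD (j * N + N - 1) 0
        = ∑ j ∈ Finset.range m, l.getD (j * N + N - 1) 0 + l.getD (m * N + N - 1) 0 :=
          Finset.sum_range_succ _ _
      _ ≤ sumMax (P.erase B) + B.sup :=
          add_le_add
            ((Finset.sum_le_sum hterm).trans (ih (Multiset.pairwise_sort _ _) hlen' hP'))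
            (Multiset.le_sup hlastB)
      _ = sumMax P := by rw [add_comm, sup_add_sumMax_erase hB]

/-- Chain of bounds on sums of batch maxima:
`m·min X ≤ Σ_sorted ≤ Σ_any ≤ m·max X`. -/
theorem sumMax_chain_bounds (L : ℕ → ℕ) (hL : Monotone L)
    (m N : ℕ) (hN : 0 < N)
    (minX maxX : ℕ)
    (hmin : ∀ i < m * N, minX ≤ L i) (hmax : ∀ i < m * N, L i ≤ maxX)
    (P : Multiset (Multiset ℕ)) (hP : IsPartition (lengthsOf L 0 (m * N)) N P) :
    m * minX ≤ (∑ j ∈ Finset.range m, (lengthsOf L (j * N) N).sup) ∧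
      (∑ j ∈ Finset.range m, (lengthsOf L (j * N) N).sup) ≤ sumMax P ∧
      sumMax P ≤ m * maxX := by
  set l := (List.range (m * N)).map L
  have hl : (l : Multiset ℕ) = lengthsOf L 0 (m * N) := by
    simp [l, lengthsOf, Multiset.range]
  have hsorted : ∑ j ∈ Finset.range m, (lengthsOf L (j * N) N).sup =
      ∑ j ∈ Finset.range m, l.getD (j * N + N - 1) 0 := by
    refine Finset.sum_congr rfl fun j hj => ?_
    have hlast := Nat.mul_add_sub_one_lt_mul hN (Finset.mem_range.mp hj)
    rw [lengthsOf_sup hL _ hN, List.getD_eq_getElem _ _ (by simpa [l] using hlast)]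
    simp [l]
  refine ⟨?_, ?_, ?_⟩
  · refine (Finset.card_nsmul_le_sum _ _ minX fun j hj => ?_).trans_eq' (by simp)
    rw [lengthsOf_sup hL _ hN]
    exact hmin _ (Nat.mul_add_sub_one_lt_mul hN (Finset.mem_range.mp hj))
  · rw [hsorted]
    exact sum_sortedBlockMax_le_sumMax hN
      (List.pairwise_lt_range.map L fun _ _ h => hL h.le) (by simp) (hl ▸ hP)
  · have hcardP : Multiset.card P = m := hP.card_eq_of_card_eq hN (by simp [lengthsOf])
    refine hcardP ▸ sumMax_le_card_mul fun x hx => ?_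
    rw [hP.1] at hx
    obtain ⟨r, hr, rfl⟩ := Multiset.mem_map.mp hx
    exact hmax _ (by simpa using hr)
end
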